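/- arXiv:math/0303240 — 4 statements merged into one kernel-verified Lean document; each statement's English description precedes it below -/
import Mathlib

section
/- Let d be an even positive integer and ζ a primitive d-th root of unity in ℂ. Let l' divide d with l = d/l' odd, and S = {l·s : 0 ≤ s < l'}. If a and b are integers with ζ^(2la) ≠ 1 or ζ^(2lb) ≠ 1, then ∑_{j,j' ∈ S} ζ^(ja + j'b) (-1)^(jj') = 0. -/
open Finset

private lemma geom_zero (n : ℕ) (hn : Even n) (w : ℂ) (hw : w ^ n = 1) (hw2 : w ^ 2 ≠ 1)
    (k : ℕ) : ∑ s ∈ range n, ((-1 : ℂ) ^ k * w) ^ s = 0 := by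
  have hw1 : ((-1 : ℂ) ^ k * w) ≠ 1 := by
    rcases Nat.even_or_odd k with hk | hk
    · rw [hk.neg_one_pow, one_mul]
      intro h1; exact hw2 (by rw [h1, one_pow])
    · rw [hk.neg_one_pow, neg_one_mul]
      intro h1
      apply hw2
      have : w = -1 := by linear_combination -h1
      rw [this]; ring
  rw [geom_sum_eq hw1, mul_pow, ← pow_mul, mul_comm k n, pow_mul, hn.neg_one_pow,
    one_pow, one_mul, hw]
  simp

private lemma key (n : ℕ) (hn : Even n) (u v : ℂ) (hun : u ^ n = 1) (hvn : v ^ n = 1)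
    (h : u ^ 2 ≠ 1 ∨ v ^ 2 ≠ 1) :
    ∑ s ∈ range n, ∑ s' ∈ range n, u ^ s * v ^ s' * (-1 : ℂ) ^ (s * s') = 0 := by
  rcases h with hu2 | hv2
  · rw [Finset.sum_comm]
    apply Finset.sum_eq_zero
    intro s' _
    have : ∑ s ∈ range n, u ^ s * v ^ s' * (-1 : ℂ) ^ (s * s')
        = v ^ s' * ∑ s ∈ range n, ((-1 : ℂ) ^ s' * u) ^ s := by
      rw [Finset.mul_sum]
      refine Finset.sum_congr rfl fun s _ => ?_
      rw [mul_pow, ← pow_mul, mul_comm s' s]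
      ring
    rw [this, geom_zero n hn u hun hu2 s', mul_zero]
  · apply Finset.sum_eq_zero
    intro s _
    have : ∑ s' ∈ range n, u ^ s * v ^ s' * (-1 : ℂ) ^ (s * s')
        = u ^ s * ∑ s' ∈ range n, ((-1 : ℂ) ^ s * v) ^ s' := by
      rw [Finset.mul_sum]
      refine Finset.sum_congr rfl fun s' _ => ?_
      rw [mul_pow, ← pow_mul]
      ring
    rw [this, geom_zero n hn v hvn hv2 s, mul_zero]

theorem stmt_1 (d l' : ℕ) (hd : 0 < d) (hde : Even d) (hl' : 0 < l')
    (hdvd : l' ∣ d) (hlodd : Odd (d / l'))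
    (ζ : ℂ) (hζ : IsPrimitiveRoot ζ d) (a b : ℤ)
    (h : ζ ^ ((2 * (d / l' : ℕ) : ℤ) * a) ≠ 1 ∨ ζ ^ ((2 * (d / l' : ℕ) : ℤ) * b) ≠ 1) :
    ∑ s ∈ Finset.range l', ∑ s' ∈ Finset.range l',
      ζ ^ (((d / l' * s : ℕ) : ℤ) * a + ((d / l' * s' : ℕ) : ℤ) * b) *
        (-1 : ℂ) ^ ((d / l' * s) * (d / l' * s')) = 0 := by
  set l := d / l' with hl
  have hld : l' * l = d := Nat.mul_div_cancel' hdvd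
  have hζ0 : ζ ≠ 0 := hζ.ne_zero hd.ne'
  have hζd : ζ ^ (d : ℤ) = 1 := by
    rw [zpow_natCast]; exact hζ.pow_eq_one
  have hl'even : Even l' := by
    rcases Nat.even_mul.mp (hld ▸ hde) with h1 | h1
    · exact h1
    · exact absurd h1 (Nat.not_even_iff_odd.mpr hlodd)
  set u := ζ ^ ((l : ℤ) * a) with hu
  set v := ζ ^ ((l : ℤ) * b) with hv
  have hun : u ^ l' = 1 := by
    rw [hu, ← zpow_natCast _ l', ← zpow_mul]
    have : (l : ℤ) * a * (l' : ℤ) = (d : ℤ) * a := by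
      push_cast [← hld]; ring
    rw [this, zpow_mul, hζd, one_zpow]
  have hvn : v ^ l' = 1 := by
    rw [hv, ← zpow_natCast _ l', ← zpow_mul]
    have : (l : ℤ) * b * (l' : ℤ) = (d : ℤ) * b := by
      push_cast [← hld]; ring
    rw [this, zpow_mul, hζd, one_zpow]
  have h2 : u ^ 2 ≠ 1 ∨ v ^ 2 ≠ 1 := by
    rcases h with h | h
    · left
      rw [hu, ← zpow_natCast _ 2, ← zpow_mul]
      convert h using 2
      push_cast; ring
    · right
      rw [hv, ← zpow_natCast _ 2, ← zpow_mul]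
      convert h using 2
      push_cast; ring
  have := key l' hl'even u v hun hvn h2
  rw [← this]
  refine Finset.sum_congr rfl fun s _ => Finset.sum_congr rfl fun s' _ => ?_
  congr 1
  · rw [zpow_add₀ hζ0, hu, hv, ← zpow_natCast (ζ ^ ((l:ℤ)*a)) s,
      ← zpow_natCast (ζ ^ ((l:ℤ)*b)) s', ← zpow_mul, ← zpow_mul]
    congr 2 <;> push_cast <;> ring
  · have : (l * s) * (l * s') = (l * l) * (s * s') := by ring
    rw [this, pow_mul, (hlodd.mul hlodd).neg_one_pow]
end

section
/- Let d be an even positive integer and ζ a primitive d-th root of unity in ℂ. Let l' divide d with l = d/l' odd and l' even, and S = {l·s : 0 ≤ s < l'}. If l' ∣ a and l' ∣ b, then ∑_{j,j' ∈ S} ζ^(ja + j'b) (-1)^(jj') = l'^2 / 2. -/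
/-!
Since `l' ∣ a, b` and `d = l·l'`, every exponent of `ζ` is a multiple of `d`, so the `ζ`-factor is `1`.
As `l` is odd, `(-1)^((ls)(ls')) = (-1)^(ss')`. Writing `l' = 2m`, the inner sum over `s'` is `2m` for
even `s` and `0` for odd `s`, which leaves `m · 2m = l'^2 / 2`.
-/

open Finset

theorem neg_one_pow_mul_mul_of_odd {R : Type*} [Monoid R] [HasDistribNeg R] {l : ℕ} (hl : Odd l)
    (s t : ℕ) : (-1 : R) ^ ((l * s) * (l * t)) = (-1) ^ (s * t) := by
  rw [show (l * s) * (l * t) = (l * l) * (s * t) by ring, pow_mul, (hl.mul hl).neg_one_pow]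

theorem sum_range_two_mul_neg_one_pow_mul {R : Type*} [Ring R] (m s : ℕ) :
    ∑ t ∈ range (2 * m), (-1 : R) ^ (s * t) = m * (1 + (-1) ^ s) := by
  simp only [pow_mul]
  rcases s.even_or_odd with hs | hs
  · simp only [hs.neg_one_pow, one_pow, sum_const, card_range, nsmul_eq_mul, mul_one]
    push_cast
    rw [mul_add, mul_one, two_mul]
  · rw [hs.neg_one_pow, neg_one_geom_sum, if_pos (even_two_mul m), add_neg_cancel, mul_zero]

theorem sum_range_two_mul_sum_range_two_mul_neg_one_pow_mul {R : Type*} [Ring R] (m : ℕ) :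
    ∑ s ∈ range (2 * m), ∑ t ∈ range (2 * m), (-1 : R) ^ (s * t) = 2 * m ^ 2 := by
  simp only [sum_range_two_mul_neg_one_pow_mul, ← mul_sum, sum_add_distrib, sum_const, card_range,
    nsmul_eq_mul, mul_one, neg_one_geom_sum, if_pos (even_two_mul m), add_zero]
  rw [Nat.cast_mul, Nat.cast_ofNat, sq, ← mul_assoc, (Nat.cast_commute m 2).eq, mul_assoc]

theorem stmt_2_general (d l' : ℕ) (hl'e : Even l')
    (hdvd : l' ∣ d) (hlodd : Odd (d / l'))
    (ζ : ℂ) (hζ : IsPrimitiveRoot ζ d) (a b : ℤ)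
    (ha : (l' : ℤ) ∣ a) (hb : (l' : ℤ) ∣ b) :
    ∑ s ∈ Finset.range l', ∑ s' ∈ Finset.range l',
      ζ ^ (((d / l' * s : ℕ) : ℤ) * a + ((d / l' * s' : ℕ) : ℤ) * b) *
        (-1 : ℂ) ^ ((d / l' * s) * (d / l' * s')) = (l' : ℂ) ^ 2 / 2 := by
  set l := d / l'
  have hd : ((l * l' : ℕ) : ℤ) = d := congrArg _ (Nat.div_mul_cancel hdvd)
  have hζ_one (s t : ℕ) : ζ ^ (((l * s : ℕ) : ℤ) * a + ((l * t : ℕ) : ℤ) * b) = 1 := by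
    rw [hζ.zpow_eq_one_iff_dvd, ← hd]
    push_cast
    simp only [mul_assoc]
    exact dvd_add (mul_dvd_mul_left _ (ha.mul_left _)) (mul_dvd_mul_left _ (hb.mul_left _))
  obtain ⟨m, hm⟩ := hl'e.two_dvd
  calc _ = ∑ s ∈ range l', ∑ t ∈ range l', (-1 : ℂ) ^ (s * t) := by
        simp only [hζ_one, one_mul, neg_one_pow_mul_mul_of_odd hlodd]
    _ = (l' : ℂ) ^ 2 / 2 := by
        rw [hm, sum_range_two_mul_sum_range_two_mul_neg_one_pow_mul]
        push_cast
        ring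

theorem stmt_2 (d l' : ℕ) (hd : 0 < d) (hde : Even d) (hl' : 0 < l') (hl'e : Even l')
    (hdvd : l' ∣ d) (hlodd : Odd (d / l'))
    (ζ : ℂ) (hζ : IsPrimitiveRoot ζ d) (a b : ℤ)
    (ha : (l' : ℤ) ∣ a) (hb : (l' : ℤ) ∣ b) :
    ∑ s ∈ Finset.range l', ∑ s' ∈ Finset.range l',
      ζ ^ (((d / l' * s : ℕ) : ℤ) * a + ((d / l' * s' : ℕ) : ℤ) * b) *
        (-1 : ℂ) ^ ((d / l' * s) * (d / l' * s')) = (l' : ℂ) ^ 2 / 2 :=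
  stmt_2_general d l' hl'e hdvd hlodd ζ hζ a b ha hb
end

section
/- Let d be an even positive integer and ζ a primitive d-th root of unity in ℂ. Let l' divide d with l = d/l' odd and l' even, and S = {l·s : 0 ≤ s < l'}. If a ≡ 0 and b ≡ l'/2 (mod l'), then ∑_{j,j' ∈ S} ζ^(ja + j'b) (-1)^(jj') = l'^2 / 2. -/
/-!
Write `l = d / l'` and `l' = 2t`. Since `ζ` has order `d = 2lt`, `ζ ^ (lt) = -1`; the congruences
on `a` and `b` then make `ζ ^ (l s a + l s' b) = (-1) ^ s'`, and `l` odd makes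
`(-1) ^ (l s · l s') = (-1) ^ (s s')`. So the summand is the character value `(-1) ^ ((s + 1) s')`,
whose inner sum over `s'` is `l'` for odd `s` and `0` for even `s`; there are `t` odd `s`.
-/

open Finset

lemma IsPrimitiveRoot.pow_eq_neg_one_of_mul_two {R : Type*} [CommRing R] [NoZeroDivisors R]
    {ζ : R} {n : ℕ} (hn : n ≠ 0) (hζ : IsPrimitiveRoot ζ (n * 2)) : ζ ^ n = -1 := by
  have h := hζ.pow_of_dvd hn (dvd_mul_right n 2)
  rw [Nat.mul_div_cancel_left 2 (Nat.pos_of_ne_zero hn)] at h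
  exact h.eq_neg_one_of_two_right

lemma zpow_mul_add_mul_eq_neg_one_pow {K : Type*} [DivisionRing K] {ζ : K} {l t : ℕ}
    (hζ : ζ ^ (l * t) = -1) {a b : ℤ} (ha : 2 * (t : ℤ) ∣ a) (hb : 2 * (t : ℤ) ∣ b - t)
    (s s' : ℕ) : ζ ^ (((l * s : ℕ) : ℤ) * a + ((l * s' : ℕ) : ℤ) * b) = (-1) ^ s' := by
  obtain ⟨k, rfl⟩ := ha
  obtain ⟨m, hm⟩ := hb
  have hexp : ((l * s : ℕ) : ℤ) * (2 * t * k) + ((l * s' : ℕ) : ℤ) * b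
      = ((l * t : ℕ) : ℤ) * (s' + 2 * (s * k + s' * m)) := by
    rw [eq_add_of_sub_eq hm]; push_cast; ring
  rw [hexp, zpow_mul, zpow_natCast, hζ, zpow_add₀ (neg_ne_zero.mpr one_ne_zero),
    (even_two_mul _).neg_one_zpow, mul_one, zpow_natCast]

lemma neg_one_pow_mul_mul_mul_of_odd {R : Type*} [Monoid R] [HasDistribNeg R] {l : ℕ}
    (hl : Odd l) (m n : ℕ) : (-1 : R) ^ (l * m * (l * n)) = (-1) ^ (m * n) := by
  rw [show l * m * (l * n) = l * l * (m * n) by ring, pow_mul, (hl.mul hl).neg_one_pow]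

lemma sum_range_neg_one_pow_mul {R : Type*} [Ring R] {n : ℕ} (hn : Even n) (c : ℕ) :
    ∑ j ∈ range n, (-1 : R) ^ (c * j) = if Even c then (n : R) else 0 := by
  simp_rw [pow_mul]
  rcases Nat.even_or_odd c with hc | hc
  · simp [hc.neg_one_pow, hc]
  · rw [hc.neg_one_pow, neg_one_geom_sum, if_pos hn, if_neg (Nat.not_even_iff_odd.mpr hc)]

lemma sum_range_two_mul_ite_even_succ {M : Type*} [AddCommMonoid M] (c : M) (t : ℕ) :
    ∑ s ∈ range (2 * t), (if Even (s + 1) then c else 0) = t • c := by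
  induction t with
  | zero => simp
  | succ t ih =>
    rw [Nat.mul_succ, sum_range_succ, sum_range_succ, ih, succ_nsmul,
      if_neg (by simp [parity_simps]), if_pos (by simp [parity_simps]), add_zero]

lemma sum_range_sum_range_neg_one_pow_succ_mul {R : Type*} [Ring R] (t : ℕ) :
    ∑ s ∈ range (2 * t), ∑ s' ∈ range (2 * t), (-1 : R) ^ ((s + 1) * s')
      = t * (2 * t : ℕ) := by
  simp_rw [sum_range_neg_one_pow_mul (even_two_mul t), sum_range_two_mul_ite_even_succ,
    nsmul_eq_mul]

theorem stmt_4_general (d l' : ℕ) (hl' : 0 < l') (hl'e : Even l')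
    (hdvd : l' ∣ d) (hlodd : Odd (d / l'))
    (ζ : ℂ) (hζ : IsPrimitiveRoot ζ d) (a b : ℤ)
    (ha : (l' : ℤ) ∣ a) (hb : (l' : ℤ) ∣ (b - (l' / 2 : ℕ))) :
    ∑ s ∈ Finset.range l', ∑ s' ∈ Finset.range l',
      ζ ^ (((d / l' * s : ℕ) : ℤ) * a + ((d / l' * s' : ℕ) : ℤ) * b) *
        (-1 : ℂ) ^ ((d / l' * s) * (d / l' * s')) = (l' : ℂ) ^ 2 / 2 := by
  obtain ⟨t, rfl⟩ := hl'e.two_dvd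
  set l := d / (2 * t)
  have hd : d = l * t * 2 := by rw [← Nat.div_mul_cancel hdvd]; ring
  have hζlt : ζ ^ (l * t) = -1 :=
    (hd ▸ hζ).pow_eq_neg_one_of_mul_two (Nat.mul_ne_zero hlodd.pos.ne' (by omega))
  have hb' : 2 * (t : ℤ) ∣ b - t := by simpa using hb
  have hterm : ∀ s s', ζ ^ (((l * s : ℕ) : ℤ) * a + ((l * s' : ℕ) : ℤ) * b) *
      (-1 : ℂ) ^ ((l * s) * (l * s')) = (-1) ^ ((s + 1) * s') := fun s s' => by
    rw [zpow_mul_add_mul_eq_neg_one_pow hζlt (by exact_mod_cast ha) hb',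
      neg_one_pow_mul_mul_mul_of_odd hlodd, ← pow_add]
    ring_nf
  simp_rw [hterm, sum_range_sum_range_neg_one_pow_succ_mul]
  push_cast
  ring

theorem stmt_4 (d l' : ℕ) (hd : 0 < d) (hde : Even d) (hl' : 0 < l') (hl'e : Even l')
    (hdvd : l' ∣ d) (hlodd : Odd (d / l'))
    (ζ : ℂ) (hζ : IsPrimitiveRoot ζ d) (a b : ℤ)
    (ha : (l' : ℤ) ∣ a) (hb : (l' : ℤ) ∣ (b - (l' / 2 : ℕ))) :
    ∑ s ∈ Finset.range l', ∑ s' ∈ Finset.range l',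
      ζ ^ (((d / l' * s : ℕ) : ℤ) * a + ((d / l' * s' : ℕ) : ℤ) * b) *
        (-1 : ℂ) ^ ((d / l' * s) * (d / l' * s')) = (l' : ℂ) ^ 2 / 2 :=
  stmt_4_general d l' hl' hl'e hdvd hlodd ζ hζ a b ha hb
end

section
/- Let N ≥ 2, K ≥ 2 and consider the ℤ/N-action on Γ_{N,K} = {λ ∈ ℤ^N : K ≥ λ₁ ≥ ⋯ ≥ λ_{N−1} ≥ λ_N = 0} generated by σ(λ₁,…,λ_{N−1},0) = (K−λ_{N−1}, λ₁−λ_{N−1}, …, λ_{N−2}−λ_{N−1}, 0). The function λ ↦ |λ| mod gcd(N,K), where |λ| = ∑ᵢ λᵢ, is NOT invariant in general, but the function λ ↦ ∏_{1≤i<j≤N} 2 sin((λᵢ − i − λⱼ + j)π/(N+K)) is invariant under σ. -/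
/-!
Put `xᵢ = λᵢ - i`. Because `λ_N = 0`, in these coordinates `σ` is the cyclic shift
`(x₁, …, x_N) ↦ (x_N + N + K, x₁, …, x_{N-1})` followed by a common translation, which does not
change the differences `xᵢ - xⱼ`. Under the shift, the pairs `(i, j)` with `i ≥ 2` become pairs
`(i - 1, j - 1)` with the same difference, and the pairs `(1, j)` become the pairs `(j - 1, N)`
with difference `t` replaced by `(N + K) - t`; since `sin (π - θ) = sin θ` the product is unchanged.
-/

def GammaNK (N K : ℕ) : Set (Fin N → ℤ) :=
  {l | (∀ i j : Fin N, i ≤ j → l j ≤ l i) ∧ (∀ i : Fin N, 0 ≤ l i) ∧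
    (∀ i : Fin N, l i ≤ (K : ℤ)) ∧ ∀ i : Fin N, (i : ℕ) = N - 1 → l i = 0}

def sigmaMap (N K : ℕ) (hN : 2 ≤ N) (l : Fin N → ℤ) : Fin N → ℤ :=
  fun i =>
    if (i : ℕ) = N - 1 then 0
    else if (i : ℕ) = 0 then (K : ℤ) - l ⟨N - 2, by omega⟩
    else l ⟨(i : ℕ) - 1, lt_of_le_of_lt (Nat.sub_le _ 1) i.isLt⟩ - l ⟨N - 2, by omega⟩

open Finset

def cyclicShift {n : ℕ} (M : ℤ) (y : Fin (n + 1) → ℤ) : Fin (n + 1) → ℤ :=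
  Fin.cons (y (Fin.last n) + M) (Fin.init y)

section SigmaMap

variable {n K : ℕ} (hN : 2 ≤ n + 2) (l : Fin (n + 2) → ℤ)

theorem sigmaMap_zero : sigmaMap (n + 2) K hN l 0 = K - l (Fin.last n).castSucc :=
  if_neg (by simp)

theorem sigmaMap_last : sigmaMap (n + 2) K hN l (Fin.last (n + 1)) = 0 :=
  if_pos (by simp)

theorem sigmaMap_succ_castSucc (j : Fin n) :
    sigmaMap (n + 2) K hN l j.castSucc.succ = l j.castSucc.castSucc - l (Fin.last n).castSucc := by
  have hj := j.isLt
  exact (if_neg (by simp only [Fin.val_succ, Fin.val_castSucc]; omega)).trans (if_neg (by simp))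

theorem sigmaMap_sub_val (hl : l (Fin.last (n + 1)) = 0) (i : Fin (n + 2)) :
    sigmaMap (n + 2) K hN l i - i
      = cyclicShift (n + 2 + K) (fun i => l i - i) i - (1 + l (Fin.last n).castSucc) := by
  induction i using Fin.cases with
  | zero =>
    rw [sigmaMap_zero]
    simp only [cyclicShift, Fin.cons_zero, hl, Fin.val_zero, Fin.val_last]
    push_cast
    ring
  | succ i =>
    induction i using Fin.lastCases with
    | last =>
      rw [Fin.succ_last, sigmaMap_last]
      simp only [cyclicShift, Fin.cons_last, Fin.init, Fin.val_castSucc, Fin.val_last]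
      push_cast
      ring
    | cast j =>
      rw [sigmaMap_succ_castSucc]
      simp only [cyclicShift, Fin.cons_succ, Fin.init, Fin.val_succ, Fin.val_castSucc]
      push_cast
      ring

theorem sigmaMap_sub_sigmaMap (hl : l (Fin.last (n + 1)) = 0) (i j : Fin (n + 2)) :
    sigmaMap (n + 2) K hN l i - (i : ℕ) - sigmaMap (n + 2) K hN l j + (j : ℕ)
      = cyclicShift (n + 2 + K) (fun i => l i - i) i
        - cyclicShift (n + 2 + K) (fun i => l i - i) j := by
  linarith [sigmaMap_sub_val (K := K) hN l hl i, sigmaMap_sub_val (K := K) hN l hl j]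

end SigmaMap

section PairProducts

variable {α : Type*} [CommMonoid α]

theorem Fin.prod_filter_lt_eq_prod_prod_ite {n : ℕ} (F : Fin n → Fin n → α) :
    ∏ p ∈ univ.filter (fun p : Fin n × Fin n => p.1 < p.2), F p.1 p.2
      = ∏ i, ∏ j, if i < j then F i j else 1 := by
  rw [prod_filter, Fintype.prod_prod_type]

theorem Fin.prod_filter_lt_succ {n : ℕ} (F : Fin (n + 1) → Fin (n + 1) → α) :
    ∏ p ∈ univ.filter (fun p : Fin (n + 1) × Fin (n + 1) => p.1 < p.2), F p.1 p.2
      = (∏ j : Fin n, F 0 j.succ) *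
        ∏ p ∈ univ.filter (fun p : Fin n × Fin n => p.1 < p.2), F p.1.succ p.2.succ := by
  rw [prod_filter_lt_eq_prod_prod_ite, prod_filter_lt_eq_prod_prod_ite (fun i j => F i.succ j.succ)]
  simp [Fin.prod_univ_succ, Fin.succ_pos]

theorem Fin.prod_filter_lt_castSucc {n : ℕ} (F : Fin (n + 1) → Fin (n + 1) → α) :
    ∏ p ∈ univ.filter (fun p : Fin (n + 1) × Fin (n + 1) => p.1 < p.2), F p.1 p.2
      = (∏ p ∈ univ.filter (fun p : Fin n × Fin n => p.1 < p.2),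
          F p.1.castSucc p.2.castSucc) * ∏ i : Fin n, F i.castSucc (Fin.last n) := by
  rw [prod_filter_lt_eq_prod_prod_ite,
    prod_filter_lt_eq_prod_prod_ite (fun i j => F i.castSucc j.castSucc)]
  simp [Fin.prod_univ_castSucc, Fin.castSucc_lt_last, (Fin.le_last _).not_gt, prod_mul_distrib,
    mul_comm]

theorem prod_filter_lt_cyclicShift {n : ℕ} (f : ℤ → α) (M : ℤ) (hf : ∀ t, f (M - t) = f t)
    (y : Fin (n + 1) → ℤ) :
    ∏ p ∈ univ.filter (fun p : Fin (n + 1) × Fin (n + 1) => p.1 < p.2),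
      f (cyclicShift M y p.1 - cyclicShift M y p.2)
      = ∏ p ∈ univ.filter (fun p : Fin (n + 1) × Fin (n + 1) => p.1 < p.2), f (y p.1 - y p.2) := by
  rw [Fin.prod_filter_lt_succ (fun i j => f (cyclicShift M y i - cyclicShift M y j)),
    Fin.prod_filter_lt_castSucc (fun i j => f (y i - y j)), mul_comm]
  simp only [cyclicShift, Fin.cons_zero, Fin.cons_succ, Fin.init]
  congr 1
  refine prod_congr rfl fun j _ => ?_
  rw [← hf]
  congr 1
  ring

end PairProducts

theorem Real.sin_sub_mul_pi_div {M t : ℝ} (hM : M ≠ 0) :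
    Real.sin ((M - t) * Real.pi / M) = Real.sin (t * Real.pi / M) := by
  rw [sub_mul, sub_div, mul_div_cancel_left₀ _ hM, Real.sin_pi_sub]

theorem stmt_10_general (N K : ℕ) (hN : 2 ≤ N)
    (l : Fin N → ℤ) (hl : l ∈ GammaNK N K) :
    ∏ p ∈ Finset.univ.filter (fun p : Fin N × Fin N => p.1 < p.2),
      (2 * Real.sin
        (((sigmaMap N K hN l p.1 - (p.1 : ℕ) - sigmaMap N K hN l p.2 + (p.2 : ℕ) : ℤ) : ℝ)
          * Real.pi / ((N : ℝ) + K)))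
    = ∏ p ∈ Finset.univ.filter (fun p : Fin N × Fin N => p.1 < p.2),
      (2 * Real.sin
        (((l p.1 - (p.1 : ℕ) - l p.2 + (p.2 : ℕ) : ℤ) : ℝ) * Real.pi / ((N : ℝ) + K))) := by
  obtain ⟨n, rfl⟩ : ∃ n, N = n + 2 := ⟨N - 2, by omega⟩
  have hlast : l (Fin.last (n + 1)) = 0 := hl.2.2.2 _ rfl
  simp_rw [sigmaMap_sub_sigmaMap hN l hlast, sub_add]
  refine prod_filter_lt_cyclicShift (fun t : ℤ => 2 * Real.sin (t * Real.pi / ((n + 2 : ℕ) + K)))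
    (n + 2 + K) (fun t => ?_) (fun i => l i - i)
  push_cast
  rw [Real.sin_sub_mul_pi_div (by positivity)]

theorem stmt_10 (N K : ℕ) (hN : 2 ≤ N) (hK : 2 ≤ K)
    (l : Fin N → ℤ) (hl : l ∈ GammaNK N K) :
    ∏ p ∈ Finset.univ.filter (fun p : Fin N × Fin N => p.1 < p.2),
      (2 * Real.sin
        (((sigmaMap N K hN l p.1 - (p.1 : ℕ) - sigmaMap N K hN l p.2 + (p.2 : ℕ) : ℤ) : ℝ)
          * Real.pi / ((N : ℝ) + K)))
    = ∏ p ∈ Finset.univ.filter (fun p : Fin N × Fin N => p.1 < p.2),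
      (2 * Real.sin
        (((l p.1 - (p.1 : ℕ) - l p.2 + (p.2 : ℕ) : ℤ) : ℝ) * Real.pi / ((N : ℝ) + K))) :=
  stmt_10_general N K hN l hl
end
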